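/- Let L ≥ 1 be a positive integer, let I, T, N, λ1 be positive reals, let σ_{y1},…,σ_{yL} be positive reals with Λhalf = diag(σ_{y1},…,σ_{yL}), and let λ3, λ4, τ3, τ4, C1, C2 be reals with λ3 − τ3 ≠ 0, λ4 − τ4 ≠ 0, λ3 + (L−1)τ3 ≠ 0, λ4 + (L−1)τ4 ≠ 0, and C1(λ4 + (L−1)τ4) − C2(λ3 + (L−1)τ3) ≠ 0. Let ω ∈ ℝ^L be the vector with entries ω_l = σ_{yl}·λ1^{1/2}. Then (I·T/N)·[C1·ω^⊤·Λhalf^{-1}·((λ3 − τ3)·I_L + τ3·J_L)^{-1}·Λhalf^{-1}·ω − C2·ω^⊤·Λhalf^{-1}·((λ4 − τ4)·I_L + τ4·J_L)^{-1}·Λhalf^{-1}·ω]^{-1} = (I·T/(L·N·λ1))·(λ3 + (L−1)τ3)·(λ4 + (L−1)τ4) / [C1(λ4 + (L−1)τ4) − C2(λ3 + (L−1)τ3)]. -/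

import Mathlib

/-!
Since `ω = Λhalf (√λ1 · 𝟙)`, each quadratic form collapses to `λ1 · 𝟙ᵀ M⁻¹ 𝟙` with
`M = (λ - τ) I_L + τ J_L`. The all-ones vector is an eigenvector of `M` with eigenvalue
`λ + (L - 1) τ`, which the explicit (Sherman–Morrison) inverse
`M⁻¹ = (λ - τ)⁻¹ I_L - τ / ((λ - τ)(λ + (L - 1) τ)) J_L` makes precise, so each form equals
`λ1 L / (λ + (L - 1) τ)`; the closed form is then rational-function algebra.
-/

open Matrix

/-- The u×u all-ones matrix over ℝ. -/
def allOnes (u : ℕ) : Matrix (Fin u) (Fin u) ℝ := Matrix.of fun _ _ => 1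

lemma allOnes_mul_allOnes (L : ℕ) : allOnes L * allOnes L = (L : ℝ) • allOnes L := by
  ext i j
  simp [allOnes, mul_apply]

lemma allOnes_mulVec_const (L : ℕ) (r : ℝ) :
    allOnes L *ᵥ (fun _ => r) = fun _ => (L : ℝ) * r := by
  ext i
  simp [allOnes, mulVec, dotProduct]

lemma diagonal_inv_of_ne_zero {L : ℕ} {σ : Fin L → ℝ} (hσ : ∀ l, σ l ≠ 0) :
    (diagonal σ)⁻¹ = diagonal σ⁻¹ :=
  inv_eq_right_inv <| by simp [diagonal_mul_diagonal, hσ]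

lemma smul_one_add_smul_allOnes_inv {L : ℕ} {b τ : ℝ} (hb : b ≠ 0) (hbτ : b + L * τ ≠ 0) :
    (b • (1 : Matrix (Fin L) (Fin L) ℝ) + τ • allOnes L)⁻¹ =
      b⁻¹ • 1 - (τ / (b * (b + L * τ))) • allOnes L := by
  apply inv_eq_right_inv
  have hcoeff : b * -(τ / (b * (b + L * τ))) + τ * b⁻¹ + τ * -(τ / (b * (b + L * τ))) * L = 0 := by
    -- as an atom, `b + L * τ` is seen by `field_simp` to be nonzero
    generalize hs : b + L * τ = s at hbτ ⊢
    field_simp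
    rw [← hs]
    ring
  calc (b • (1 : Matrix (Fin L) (Fin L) ℝ) + τ • allOnes L) *
        (b⁻¹ • 1 - (τ / (b * (b + L * τ))) • allOnes L)
      = (b * b⁻¹) • 1 + (b * -(τ / (b * (b + L * τ))) + τ * b⁻¹
          + τ * -(τ / (b * (b + L * τ))) * L) • allOnes L := by
        simp only [sub_eq_add_neg, ← neg_smul, add_mul, mul_add, smul_mul_smul, one_mul, mul_one,
          allOnes_mul_allOnes, smul_smul, add_smul]
        abel
    _ = 1 := by rw [hcoeff, mul_inv_cancel₀ hb, one_smul, zero_smul, add_zero]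

lemma smul_one_add_smul_allOnes_inv_mulVec_const {L : ℕ} {b τ : ℝ} (hb : b ≠ 0)
    (hbτ : b + L * τ ≠ 0) (r : ℝ) :
    (b • (1 : Matrix (Fin L) (Fin L) ℝ) + τ • allOnes L)⁻¹ *ᵥ (fun _ => r) =
      fun _ => r / (b + L * τ) := by
  rw [smul_one_add_smul_allOnes_inv hb hbτ, sub_mulVec, smul_mulVec, smul_mulVec, one_mulVec,
    allOnes_mulVec_const]
  ext l
  simp only [Pi.sub_apply, Pi.smul_apply, smul_eq_mul]
  generalize hs : b + L * τ = s at hbτ ⊢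
  field_simp
  rw [← hs]
  ring

lemma dotProduct_diagonal_inv_mul_mul_diagonal_inv_mulVec {L : ℕ} {σ : Fin L → ℝ}
    (hσ : ∀ l, σ l ≠ 0) (A : Matrix (Fin L) (Fin L) ℝ) (r : ℝ) :
    (fun l => σ l * r) ⬝ᵥ (((diagonal σ)⁻¹ * A * (diagonal σ)⁻¹) *ᵥ fun l => σ l * r) =
      (fun _ => r) ⬝ᵥ (A *ᵥ fun _ => r) := by
  have hscale : diagonal σ⁻¹ *ᵥ (fun l => σ l * r) = fun _ => r := by
    ext l
    simp [mulVec_diagonal, hσ]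
  have hscale' : (fun l => σ l * r) ᵥ* diagonal σ⁻¹ = fun _ => r := by
    ext l
    simp [vecMul_diagonal, mul_right_comm _ r, hσ]
  rw [diagonal_inv_of_ne_zero hσ, ← mulVec_mulVec, hscale, ← mulVec_mulVec, dotProduct_mulVec,
    hscale']

lemma dotProduct_compoundSymmetry_inv {L : ℕ} {σ : Fin L → ℝ} (hσ : ∀ l, σ l ≠ 0)
    {a τ : ℝ} (hb : a - τ ≠ 0) (hs : a + ((L : ℝ) - 1) * τ ≠ 0) (r : ℝ) :
    (fun l => σ l * r) ⬝ᵥ (((diagonal σ)⁻¹ *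
        ((a - τ) • (1 : Matrix (Fin L) (Fin L) ℝ) + τ • allOnes L)⁻¹ *
        (diagonal σ)⁻¹) *ᵥ fun l => σ l * r) =
      r ^ 2 * L / (a + ((L : ℝ) - 1) * τ) := by
  have hsum : a - τ + L * τ = a + ((L : ℝ) - 1) * τ := by ring
  rw [dotProduct_diagonal_inv_mul_mul_diagonal_inv_mulVec hσ,
    smul_one_add_smul_allOnes_inv_mulVec_const hb (hsum ▸ hs), hsum]
  simp only [dotProduct, Finset.sum_const, Finset.card_univ, Fintype.card_fin, nsmul_eq_mul]
  ring

theorem common_effect_variance_closed_form_closed_cohort_general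
    (L : ℕ) (I T N lam1 : ℝ)
    (hlam1 : 0 < lam1)
    (σ : Fin L → ℝ) (hσ : ∀ l, 0 < σ l)
    (lam3 lam4 tau3 tau4 C1 C2 : ℝ)
    (h1 : lam3 - tau3 ≠ 0) (h2 : lam4 - tau4 ≠ 0)
    (h3 : lam3 + ((L : ℝ) - 1) * tau3 ≠ 0) (h4 : lam4 + ((L : ℝ) - 1) * tau4 ≠ 0)
    (ω : Fin L → ℝ) (hω : ∀ l, ω l = σ l * Real.sqrt lam1) :
    (I * T / N) *
      (C1 * (ω ⬝ᵥ (((Matrix.diagonal σ)⁻¹ *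
              ((lam3 - tau3) • (1 : Matrix (Fin L) (Fin L) ℝ) + tau3 • allOnes L)⁻¹ *
              (Matrix.diagonal σ)⁻¹) *ᵥ ω)) -
       C2 * (ω ⬝ᵥ (((Matrix.diagonal σ)⁻¹ *
              ((lam4 - tau4) • (1 : Matrix (Fin L) (Fin L) ℝ) + tau4 • allOnes L)⁻¹ *
              (Matrix.diagonal σ)⁻¹) *ᵥ ω)))⁻¹ =
    I * T / ((L : ℝ) * N * lam1) *
      (lam3 + ((L : ℝ) - 1) * tau3) * (lam4 + ((L : ℝ) - 1) * tau4) /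
      (C1 * (lam4 + ((L : ℝ) - 1) * tau4) - C2 * (lam3 + ((L : ℝ) - 1) * tau3)) := by
  have hσ₀ : ∀ l, σ l ≠ 0 := fun l => (hσ l).ne'
  obtain rfl : ω = fun l => σ l * Real.sqrt lam1 := funext hω
  rw [dotProduct_compoundSymmetry_inv hσ₀ h1 h3, dotProduct_compoundSymmetry_inv hσ₀ h2 h4,
    Real.sq_sqrt hlam1.le]
  set s3 := lam3 + ((L : ℝ) - 1) * tau3
  set s4 := lam4 + ((L : ℝ) - 1) * tau4
  have hcombine : C1 * (lam1 * L / s3) - C2 * (lam1 * L / s4) =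
      lam1 * L * (C1 * s4 - C2 * s3) / (s3 * s4) := by
    field_simp
  rw [hcombine, inv_div]
  -- keep the denominator atomic, so that `ring` does not expand it under `⁻¹`
  generalize C1 * s4 - C2 * s3 = D
  ring

/-- closed-cohort design: under common ICC values across endpoints, the general variance expression
for the common intervention effect estimator simplifies to the closed form of the stated closed form. -/
theorem common_effect_variance_closed_form_closed_cohort
    (L : ℕ) (hL : 1 ≤ L) (I T N lam1 : ℝ)
    (hI : 0 < I) (hT : 0 < T) (hN : 0 < N) (hlam1 : 0 < lam1)
    (σ : Fin L → ℝ) (hσ : ∀ l, 0 < σ l)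
    (lam3 lam4 tau3 tau4 C1 C2 : ℝ)
    (h1 : lam3 - tau3 ≠ 0) (h2 : lam4 - tau4 ≠ 0)
    (h3 : lam3 + ((L : ℝ) - 1) * tau3 ≠ 0) (h4 : lam4 + ((L : ℝ) - 1) * tau4 ≠ 0)
    (h5 : C1 * (lam4 + ((L : ℝ) - 1) * tau4) - C2 * (lam3 + ((L : ℝ) - 1) * tau3) ≠ 0)
    (ω : Fin L → ℝ) (hω : ∀ l, ω l = σ l * Real.sqrt lam1) :
    (I * T / N) *
      (C1 * (ω ⬝ᵥ (((Matrix.diagonal σ)⁻¹ *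
              ((lam3 - tau3) • (1 : Matrix (Fin L) (Fin L) ℝ) + tau3 • allOnes L)⁻¹ *
              (Matrix.diagonal σ)⁻¹) *ᵥ ω)) -
       C2 * (ω ⬝ᵥ (((Matrix.diagonal σ)⁻¹ *
              ((lam4 - tau4) • (1 : Matrix (Fin L) (Fin L) ℝ) + tau4 • allOnes L)⁻¹ *
              (Matrix.diagonal σ)⁻¹) *ᵥ ω)))⁻¹ =
    I * T / ((L : ℝ) * N * lam1) *
      (lam3 + ((L : ℝ) - 1) * tau3) * (lam4 + ((L : ℝ) - 1) * tau4) /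
      (C1 * (lam4 + ((L : ℝ) - 1) * tau4) - C2 * (lam3 + ((L : ℝ) - 1) * tau3)) :=
  common_effect_variance_closed_form_closed_cohort_general L I T N lam1 hlam1 σ hσ lam3 lam4 tau3
    tau4 C1 C2 h1 h2 h3 h4 ω hω
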